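/- Assume char k ≠ 2 and q ∈ k is nonzero. If P ∈ k[x_1,...,x_n] is q-deformed m-quasi-invariant and antisymmetric (σ·P = sign(σ)·P for all σ ∈ S_n), then P = K·∏_{i<j}∏_{l=-m}^{m}(x_i - q^l x_j) for some symmetric polynomial K. -/

import Mathlib

open MvPolynomial

/-- `P` is `q`-deformed `m`-quasi-invariant: for every transposition `s_{i,j}`,
`P - s_{i,j}·P` is divisible by `∏_{l=-m}^{m} (x_i - q^l x_j)`. -/
def QDeformedQuasiInvariant (k : Type*) [Field k] (n : ℕ) (q : k) (m : ℕ)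
    (P : MvPolynomial (Fin n) k) : Prop :=
  ∀ i j : Fin n, i ≠ j →
    (∏ l ∈ Finset.Icc (-(m : ℤ)) (m : ℤ), (X i - C (q ^ l) * X j))
      ∣ P - rename (Equiv.swap i j) P

/-!
Since `P` is antisymmetric, `P - s_{ij} P = 2P`, so each
`F_{ij} = ∏_{l=-m}^{m} (x_i - q^l x_j)` divides `P`. The `F_{ij}` with `i < j` are pairwise
coprime: their linear factors are irreducible, and a linear factor `x_i - c x_j` divides
`x_a - d x_b` only if `(i, j) = (a, b)`. (Within one `F_{ij}` factors may repeat, when `q` is a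
root of unity, so coprimality is only available pair by pair.) Hence `Δ = ∏_{i<j} F_{ij}`
divides `P`. Substituting `l ↦ -l` shows `F_{ji} = -F_{ij}`, so `Δ` is antisymmetric and the
quotient `P / Δ` is symmetric.
-/

open Finset

theorem Finset.prod_filter_lt_eq_prod_prod_Ioi {ι M : Type*} [Fintype ι] [LinearOrder ι]
    [LocallyFiniteOrderTop ι] [CommMonoid M] (f : ι → ι → M) :
    ∏ p ∈ univ.filter (fun p : ι × ι => p.1 < p.2), f p.1 p.2
      = ∏ i, ∏ j ∈ Ioi i, f i j := by
  rw [prod_filter, Fintype.prod_prod_type]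
  refine prod_congr rfl fun i _ => ?_
  rw [← prod_filter]
  congr 1
  ext j
  simp

theorem Equiv.Perm.prod_filter_lt_comp_eq_sign_mul_prod {R : Type*} [CommRing R] {n : ℕ}
    (σ : Equiv.Perm (Fin n)) {f : Fin n → Fin n → R} (hf : ∀ i j, f i j = -f j i) :
    ∏ p ∈ univ.filter (fun p : Fin n × Fin n => p.1 < p.2), f (σ p.1) (σ p.2)
      = σ.sign * ∏ p ∈ univ.filter (fun p : Fin n × Fin n => p.1 < p.2), f p.1 p.2 := by
  rw [prod_filter_lt_eq_prod_prod_Ioi (fun i j => f (σ i) (σ j)), prod_filter_lt_eq_prod_prod_Ioi]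
  exact σ.prod_Ioi_comp_eq_sign_mul_prod hf

theorem Finset.prod_Icc_neg_comp_neg {M : Type*} [CommMonoid M] (m : ℤ) (f : ℤ → M) :
    ∏ l ∈ Icc (-m) m, f (-l) = ∏ l ∈ Icc (-m) m, f l :=
  prod_equiv (Equiv.neg ℤ) (fun l => by simp only [mem_Icc, Equiv.neg_apply]; omega)
    (fun _ _ => rfl)

theorem Finset.prod_Icc_neg_zpow_eq_one {G : Type*} [CommGroupWithZero G] (m : ℤ) {g : G}
    (hg : g ≠ 0) : ∏ l ∈ Icc (-m) m, g ^ l = 1 :=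
  prod_involution (fun l _ => -l)
    (fun l _ => by rw [zpow_neg, mul_inv_cancel₀ (zpow_ne_zero l hg)])
    (fun l _ h hl => h (by rw [show l = 0 by omega, zpow_zero]))
    (fun l hl => by simp only [mem_Icc] at hl ⊢; omega) (fun l _ => neg_neg l)

namespace MvPolynomial

variable {k ι : Type*} [Field k]

theorem irreducible_of_isHomogeneous_one {p : MvPolynomial ι k} (hp : p.IsHomogeneous 1)
    (hp0 : p ≠ 0) : Irreducible p := by
  refine irreducible_of_totalDegree_eq_one (hp.totalDegree hp0) fun x hx => ?_
  refine isUnit_iff_ne_zero.mpr fun hx0 => hp0 (MvPolynomial.ext _ _ fun d => ?_)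
  simpa [hx0] using hx d

theorem degreeOf_le_of_dvd {R : Type*} [CommRing R] [IsDomain R] {p f : MvPolynomial ι R}
    (h : p ∣ f) (hf : f ≠ 0) (v : ι) : degreeOf v p ≤ degreeOf v f := by
  obtain ⟨g, rfl⟩ := h
  rw [degreeOf_mul_eq (left_ne_zero_of_mul hf) (right_ne_zero_of_mul hf)]
  exact Nat.le_add_right _ _

variable {a b : ι}

theorem degreeOf_X_sub_C_mul_X_left (hab : a ≠ b) (c : k) :
    degreeOf a (X a - C c * X b : MvPolynomial ι k) = 1 := by
  rw [sub_eq_add_neg, degreeOf_add_eq_of_degreeOf_lt, degreeOf_X_self]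
  rw [degreeOf_neg, degreeOf_X_self]
  exact (degreeOf_C_mul_le _ _ _).trans_lt (by simp [degreeOf_X_of_ne hab])

theorem degreeOf_X_sub_C_mul_X_right (hab : a ≠ b) {c : k} (hc : c ≠ 0) :
    degreeOf b (X a - C c * X b : MvPolynomial ι k) = 1 := by
  rw [← degreeOf_neg, neg_sub, sub_eq_add_neg, degreeOf_add_eq_of_degreeOf_lt] <;>
    simp [degreeOf_C_mul, hc, degreeOf_X_of_ne hab.symm]

theorem degreeOf_X_sub_C_mul_X_of_ne {v : ι} (hva : v ≠ a) (hvb : v ≠ b) (c : k) :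
    degreeOf v (X a - C c * X b : MvPolynomial ι k) = 0 := by
  refine Nat.eq_zero_of_le_zero ((degreeOf_sub_le _ _ _).trans ?_)
  rw [degreeOf_X_of_ne hva, zero_max]
  exact (degreeOf_C_mul_le _ _ _).trans (degreeOf_X_of_ne hvb).le

theorem irreducible_X_sub_C_mul_X (hab : a ≠ b) (c : k) :
    Irreducible (X a - C c * X b : MvPolynomial ι k) := by
  refine irreducible_of_isHomogeneous_one ((isHomogeneous_X k a).sub (isHomogeneous_C_mul_X c b))
    fun h => ?_
  simpa [h] using degreeOf_X_sub_C_mul_X_left hab c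

theorem eq_of_X_sub_C_mul_X_dvd [LinearOrder ι] {i j : ι} (hij : i < j) (hab : a < b)
    {c : k} (hc : c ≠ 0) {d : k} (h : X i - C c * X j ∣ (X a - C d * X b : MvPolynomial ι k)) :
    i = a ∧ j = b := by
  have hne := (irreducible_X_sub_C_mul_X hab.ne d).ne_zero
  -- a variable occurring in a divisor occurs in the (nonzero) dividend
  have mem : ∀ v, (v = i ∨ v = j) → v = a ∨ v = b := by
    intro v hv
    by_contra! hvab
    have hle := degreeOf_le_of_dvd h hne v
    rw [degreeOf_X_sub_C_mul_X_of_ne hvab.1 hvab.2] at hle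
    rcases hv with rfl | rfl
    · simp [degreeOf_X_sub_C_mul_X_left hij.ne] at hle
    · simp [degreeOf_X_sub_C_mul_X_right hij.ne hc] at hle
  rcases mem i (.inl rfl) with rfl | rfl <;> rcases mem j (.inr rfl) with rfl | rfl
  · exact absurd hij (lt_irrefl _)
  · exact ⟨rfl, rfl⟩
  · exact absurd hij hab.not_gt
  · exact absurd hij (lt_irrefl _)

theorem isSymmetric_of_antisymmetric_mul {R : Type*} [CommRing R] [IsDomain R] [Fintype ι]
    [DecidableEq ι] {K Δ : MvPolynomial ι R} (hΔ : Δ ≠ 0)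
    (hΔanti : ∀ σ : Equiv.Perm ι, rename σ Δ = (σ.sign : ℤ) • Δ)
    (hanti : ∀ σ : Equiv.Perm ι, rename σ (K * Δ) = (σ.sign : ℤ) • (K * Δ)) :
    K.IsSymmetric := by
  intro σ
  have h := hanti σ
  rw [map_mul, hΔanti σ, mul_smul_comm, ← Units.smul_def, ← Units.smul_def,
    smul_left_cancel_iff] at h
  exact mul_right_cancel₀ hΔ h

end MvPolynomial

section QVandermonde

variable {k : Type*} [Field k] {q : k} {m : ℕ}

noncomputable def qPairFactor {ι : Type*} (q : k) (m : ℕ) (a b : ι) : MvPolynomial ι k :=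
  ∏ l ∈ Icc (-(m : ℤ)) m, (X a - C (q ^ l) * X b)

noncomputable def qVandermonde (n : ℕ) (q : k) (m : ℕ) : MvPolynomial (Fin n) k :=
  ∏ p ∈ univ.filter (fun p : Fin n × Fin n => p.1 < p.2), qPairFactor q m p.1 p.2

theorem qPairFactor_swap {ι : Type*} (hq : q ≠ 0) (a b : ι) :
    qPairFactor q m b a = -qPairFactor q m a b := by
  have hfactor : ∀ l : ℤ, (X b - C (q ^ (-l)) * X a : MvPolynomial ι k)
      = -C (q ^ (-l)) * (X a - C (q ^ l) * X b) := fun l => by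
    have hC : (C (q ^ (-l)) * C (q ^ l) : MvPolynomial ι k) = 1 := by
      rw [← C_mul, zpow_neg, inv_mul_cancel₀ (zpow_ne_zero _ hq), C_1]
    linear_combination (-(X b : MvPolynomial ι k)) * hC
  have hcard : (Icc (-(m : ℤ)) m).card = 2 * m + 1 := by rw [Int.card_Icc]; omega
  calc qPairFactor q m b a
      = ∏ l ∈ Icc (-(m : ℤ)) m, (X b - C (q ^ (-l)) * X a : MvPolynomial ι k) :=
        (prod_Icc_neg_comp_neg _ _).symm
    _ = (-1) ^ (2 * m + 1) * C (∏ l ∈ Icc (-(m : ℤ)) m, q ^ (-l)) * qPairFactor q m a b := by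
        simp only [hfactor, prod_mul_distrib, prod_neg, hcard, map_prod, qPairFactor]
    _ = -qPairFactor q m a b := by
        rw [prod_Icc_neg_comp_neg _ (q ^ ·), prod_Icc_neg_zpow_eq_one _ hq, C_1,
          (odd_two_mul_add_one m).neg_one_pow]
        ring

theorem rename_qPairFactor {ι ι' : Type*} (f : ι → ι') (a b : ι) :
    rename f (qPairFactor q m a b) = qPairFactor q m (f a) (f b) := by
  simp [qPairFactor, map_prod]

theorem rename_qVandermonde {n : ℕ} (hq : q ≠ 0) (σ : Equiv.Perm (Fin n)) :
    rename σ (qVandermonde n q m) = (σ.sign : ℤ) • qVandermonde n q m := by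
  simp only [qVandermonde, map_prod, rename_qPairFactor]
  rw [σ.prod_filter_lt_comp_eq_sign_mul_prod fun i j => qPairFactor_swap hq j i, zsmul_eq_mul]

theorem isRelPrime_qPairFactor {ι : Type*} [LinearOrder ι] (hq : q ≠ 0) {i j a b : ι}
    (hij : i < j) (hab : a < b) (hne : (i, j) ≠ (a, b)) :
    IsRelPrime (qPairFactor q m i j) (qPairFactor q m a b) :=
  IsRelPrime.prod_left fun l _ => IsRelPrime.prod_right fun _ _ =>
    (irreducible_X_sub_C_mul_X hij.ne _).isRelPrime_iff_not_dvd.mpr fun h => hne <| by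
      obtain ⟨rfl, rfl⟩ := eq_of_X_sub_C_mul_X_dvd hij hab (zpow_ne_zero l hq) h
      rfl

theorem qVandermonde_dvd {n : ℕ} (hq : q ≠ 0) {P : MvPolynomial (Fin n) k}
    (h : ∀ i j : Fin n, i < j → qPairFactor q m i j ∣ P) : qVandermonde n q m ∣ P :=
  prod_dvd_of_isRelPrime
    (fun _ hp _ hp' hne =>
      isRelPrime_qPairFactor hq (mem_filter.mp hp).2 (mem_filter.mp hp').2 hne)
    fun _ hp => h _ _ (mem_filter.mp hp).2

theorem qVandermonde_ne_zero {n : ℕ} : qVandermonde n q m ≠ 0 :=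
  prod_ne_zero_iff.mpr fun _ hp => prod_ne_zero_iff.mpr fun _ _ =>
    (irreducible_X_sub_C_mul_X (mem_filter.mp hp).2.ne _).ne_zero

end QVandermonde

theorem qDeformed_antisymmetric (k : Type*) [Field k] (hk : ringChar k ≠ 2)
    (n : ℕ) (q : k) (hq : q ≠ 0) (m : ℕ) (P : MvPolynomial (Fin n) k)
    (hqi : QDeformedQuasiInvariant k n q m P)
    (hanti : ∀ σ : Equiv.Perm (Fin n), rename σ P = (Equiv.Perm.sign σ : ℤ) • P) :
    ∃ K : MvPolynomial (Fin n) k, K.IsSymmetric ∧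
      P = K * ∏ p ∈ Finset.univ.filter (fun p : Fin n × Fin n => p.1 < p.2),
        ∏ l ∈ Finset.Icc (-(m : ℤ)) (m : ℤ), (X p.1 - C (q ^ l) * X p.2) := by
  have htwo : IsUnit (2 : MvPolynomial (Fin n) k) := by
    simpa only [map_ofNat] using
      (Ring.two_ne_zero hk).isUnit.map (C : k →+* MvPolynomial (Fin n) k)
  have hdvd : ∀ i j : Fin n, i < j → qPairFactor q m i j ∣ P := fun i j hij => by
    have h := hqi i j hij.ne
    rwa [hanti, Equiv.Perm.sign_swap hij.ne, Units.val_neg, Units.val_one, neg_one_zsmul,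
      sub_neg_eq_add, ← two_mul, htwo.dvd_mul_left] at h
  obtain ⟨K, hK⟩ := qVandermonde_dvd hq hdvd
  refine ⟨K, isSymmetric_of_antisymmetric_mul (Δ := qVandermonde n q m) qVandermonde_ne_zero
    (rename_qVandermonde hq) fun σ => ?_, hK.trans (mul_comm _ _)⟩
  rw [mul_comm, ← hK, hanti]
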